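/- arXiv:1808.00873 — 3 statements merged into one kernel-verified Lean document; each statement's English description precedes it below -/
import Mathlib

section
/- Let β₀, β₁ ∈ (0,1) and define the adapted metric on Σ_A by d(s,t) = β₁^{♯_i(s)}·β₀^{i-♯_i(s)} where i = max{k | s_k = t_k agree up to k} (with d(s,t) = 0 if s = t). Then the coding map π: Σ_A → ℝ, π(s) = ∑_{i=1}^∞ s_i β₁^{♯_i(s)} β₀^{i-♯_i(s)}, is Lipschitz continuous with respect to this adapted metric. -/
/-!
Two sequences that first differ at index `n` have equal coding series up to index `n`, so
`π s - π t` is a difference of two nonnegative tails. Each step of a sequence multiplies the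
weight `β₁ ^ ♯ * β₀ ^ (i - ♯)` by `β₀` or `β₁`, hence by at most `M = max β₀ β₁`, so both tails
are bounded by the weight of the common prefix times `M / (1 - M)`.
-/

open Finset

lemma tsum_le_div_of_le_geometric {f : ℕ → ℝ} {c r : ℝ} (hr₀ : 0 ≤ r) (hr₁ : r < 1)
    (hf : Summable f) (hfc : ∀ j, f j ≤ c * r ^ j) : ∑' j, f j ≤ c / (1 - r) := by
  calc ∑' j, f j ≤ ∑' j, c * r ^ j :=
        hf.tsum_le_tsum hfc ((summable_geometric_of_lt_one hr₀ hr₁).mul_left c)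
    _ = c / (1 - r) := by rw [tsum_mul_left, tsum_geometric_of_lt_one hr₀ hr₁, div_eq_mul_inv]

lemma abs_tsum_sub_tsum_le_of_eq_of_tails_le {f g : ℕ → ℝ} {n : ℕ} {c r : ℝ}
    (hr₀ : 0 ≤ r) (hr₁ : r < 1) (hf : Summable f) (hg : Summable g)
    (hf₀ : ∀ i, 0 ≤ f i) (hg₀ : ∀ i, 0 ≤ g i) (hfg : ∀ i < n, f i = g i)
    (hfc : ∀ j, f (j + n) ≤ c * r ^ j) (hgc : ∀ j, g (j + n) ≤ c * r ^ j) :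
    |∑' i, f i - ∑' i, g i| ≤ c / (1 - r) := by
  have hhead : ∑ i ∈ range n, f i = ∑ i ∈ range n, g i :=
    sum_congr rfl fun i hi => hfg i (mem_range.mp hi)
  rw [← hf.sum_add_tsum_nat_add n, ← hg.sum_add_tsum_nat_add n, hhead, add_sub_add_left_eq_sub]
  exact abs_sub_le_of_nonneg_of_le (tsum_nonneg fun j => hf₀ _)
    (tsum_le_div_of_le_geometric hr₀ hr₁ ((summable_nat_add_iff n).mpr hf) hfc)
    (tsum_nonneg fun j => hg₀ _)
    (tsum_le_div_of_le_geometric hr₀ hr₁ ((summable_nat_add_iff n).mpr hg) hgc)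

section CodingMap

variable {β₀ β₁ M : ℝ} {u v : ℕ → ℕ}

/-- The adapted distance `d(u, v)` when `u` and `v` have a common prefix of length exactly `n`
(sequences are indexed from `0`, so `♯_n(u)` sums `u 0, …, u (n - 1)`). -/
def cylinderWeight (β₀ β₁ : ℝ) (u : ℕ → ℕ) (n : ℕ) : ℝ :=
  β₁ ^ (∑ k ∈ range n, u k) * β₀ ^ (n - ∑ k ∈ range n, u k)

def codingTerm (β₀ β₁ : ℝ) (u : ℕ → ℕ) (i : ℕ) : ℝ :=
  (u i : ℝ) * β₁ ^ (∑ k ∈ range (i + 1), u k) * β₀ ^ (i + 1 - ∑ k ∈ range (i + 1), u k)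

lemma codingTerm_eq (β₀ β₁ : ℝ) (u : ℕ → ℕ) (i : ℕ) :
    codingTerm β₀ β₁ u i = u i * cylinderWeight β₀ β₁ u (i + 1) :=
  mul_assoc _ _ _

lemma cylinderWeight_zero (β₀ β₁ : ℝ) (u : ℕ → ℕ) : cylinderWeight β₀ β₁ u 0 = 1 := by
  simp [cylinderWeight]

lemma cylinderWeight_nonneg (h₀ : 0 ≤ β₀) (h₁ : 0 ≤ β₁) (u : ℕ → ℕ) (n : ℕ) :
    0 ≤ cylinderWeight β₀ β₁ u n := by
  unfold cylinderWeight; positivity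

lemma cylinderWeight_congr {n : ℕ} (huv : ∀ k < n, u k = v k) :
    cylinderWeight β₀ β₁ u n = cylinderWeight β₀ β₁ v n := by
  rw [cylinderWeight, cylinderWeight, sum_congr rfl fun k hk => huv k (mem_range.mp hk)]

lemma cylinderWeight_succ (hu : ∀ k, u k ≤ 1) (n : ℕ) :
    cylinderWeight β₀ β₁ u (n + 1) = cylinderWeight β₀ β₁ u n * if u n = 0 then β₀ else β₁ := by
  have hsum : ∑ k ∈ range n, u k ≤ n :=
    (sum_le_sum fun k _ => hu k).trans_eq (by simp)
  unfold cylinderWeight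
  rw [sum_range_succ]
  rcases Nat.le_one_iff_eq_zero_or_eq_one.mp (hu n) with h | h <;> simp only [h, if_true]
  · rw [add_zero, Nat.sub_add_comm hsum, pow_succ, mul_assoc]
  · rw [if_neg one_ne_zero, Nat.add_sub_add_right, pow_succ, mul_right_comm]

lemma cylinderWeight_add_le (h₀ : 0 ≤ β₀) (h₁ : 0 ≤ β₁) (hM₀ : β₀ ≤ M) (hM₁ : β₁ ≤ M)
    (hu : ∀ k, u k ≤ 1) (n m : ℕ) :
    cylinderWeight β₀ β₁ u (n + m) ≤ cylinderWeight β₀ β₁ u n * M ^ m := by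
  induction m with
  | zero => simp
  | succ m ih =>
    have hstep : (if u (n + m) = 0 then β₀ else β₁) ≤ M := by split_ifs <;> assumption
    rw [← add_assoc, cylinderWeight_succ hu, pow_succ, ← mul_assoc]
    exact mul_le_mul ih hstep (by split_ifs <;> assumption)
      (mul_nonneg (cylinderWeight_nonneg h₀ h₁ u n) (pow_nonneg (h₀.trans hM₀) m))

lemma codingTerm_nonneg (h₀ : 0 ≤ β₀) (h₁ : 0 ≤ β₁) (u : ℕ → ℕ) (i : ℕ) :
    0 ≤ codingTerm β₀ β₁ u i := by
  rw [codingTerm_eq]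
  exact mul_nonneg (Nat.cast_nonneg _) (cylinderWeight_nonneg h₀ h₁ u _)

lemma codingTerm_add_le (h₀ : 0 ≤ β₀) (h₁ : 0 ≤ β₁) (hM₀ : β₀ ≤ M) (hM₁ : β₁ ≤ M)
    (hu : ∀ k, u k ≤ 1) (n j : ℕ) :
    codingTerm β₀ β₁ u (j + n) ≤ cylinderWeight β₀ β₁ u n * M * M ^ j := by
  have hui : (u (j + n) : ℝ) ≤ 1 := by exact_mod_cast hu (j + n)
  calc codingTerm β₀ β₁ u (j + n) = u (j + n) * cylinderWeight β₀ β₁ u (n + (j + 1)) := by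
        rw [codingTerm_eq, add_comm j n, add_assoc]
    _ ≤ 1 * cylinderWeight β₀ β₁ u (n + (j + 1)) :=
        mul_le_mul_of_nonneg_right hui (cylinderWeight_nonneg h₀ h₁ u _)
    _ ≤ cylinderWeight β₀ β₁ u n * M ^ (j + 1) := by
        rw [one_mul]; exact cylinderWeight_add_le h₀ h₁ hM₀ hM₁ hu n (j + 1)
    _ = cylinderWeight β₀ β₁ u n * M * M ^ j := by ring

lemma summable_codingTerm (h₀ : 0 ≤ β₀) (h₁ : 0 ≤ β₁) (hM₀ : β₀ ≤ M) (hM₁ : β₁ ≤ M)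
    (hM : M < 1) (hu : ∀ k, u k ≤ 1) : Summable (codingTerm β₀ β₁ u) := by
  refine Summable.of_nonneg_of_le (codingTerm_nonneg h₀ h₁ u) (fun i => ?_)
    ((summable_geometric_of_lt_one (h₀.trans hM₀) hM).mul_left M)
  simpa [cylinderWeight_zero] using codingTerm_add_le h₀ h₁ hM₀ hM₁ hu 0 i

noncomputable def codingMap (β₀ β₁ : ℝ) (u : ℕ → ℕ) : ℝ :=
  ∑' i, codingTerm β₀ β₁ u i

theorem abs_codingMap_sub_le (h₀ : 0 ≤ β₀) (h₁ : 0 ≤ β₁) (hM₀ : β₀ ≤ M) (hM₁ : β₁ ≤ M)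
    (hM : M < 1) (hu : ∀ k, u k ≤ 1) (hv : ∀ k, v k ≤ 1) {n : ℕ} (huv : ∀ k < n, u k = v k) :
    |codingMap β₀ β₁ u - codingMap β₀ β₁ v| ≤ M / (1 - M) * cylinderWeight β₀ β₁ u n := by
  have hterm : ∀ i < n, codingTerm β₀ β₁ u i = codingTerm β₀ β₁ v i := fun i hi => by
    rw [codingTerm_eq, codingTerm_eq, huv i hi,
      cylinderWeight_congr fun k hk => huv k (by omega)]
  have hweight : cylinderWeight β₀ β₁ v n = cylinderWeight β₀ β₁ u n :=
    (cylinderWeight_congr huv).symm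
  calc |codingMap β₀ β₁ u - codingMap β₀ β₁ v| ≤ cylinderWeight β₀ β₁ u n * M / (1 - M) :=
        abs_tsum_sub_tsum_le_of_eq_of_tails_le (h₀.trans hM₀) hM
          (summable_codingTerm h₀ h₁ hM₀ hM₁ hM hu) (summable_codingTerm h₀ h₁ hM₀ hM₁ hM hv)
          (codingTerm_nonneg h₀ h₁ u) (codingTerm_nonneg h₀ h₁ v) hterm
          (codingTerm_add_le h₀ h₁ hM₀ hM₁ hu n)
          (hweight ▸ codingTerm_add_le h₀ h₁ hM₀ hM₁ hv n)
    _ = M / (1 - M) * cylinderWeight β₀ β₁ u n := by ring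

end CodingMap

open Classical in
/-- The coding map π is Lipschitz with respect to the adapted metric
d(s,t) = β₁^{♯_i(s)} β₀^{i-♯_i(s)}, where i is the length of the longest
common prefix of s and t. -/
theorem stmt_11 (β₀ β₁ : ℝ) (hβ₀ : β₀ ∈ Set.Ioo (0:ℝ) 1) (hβ₁ : β₁ ∈ Set.Ioo (0:ℝ) 1) :
    ∃ C > 0, ∀ s t : ℕ → ℕ,
      (∀ i, s i ≤ 1) → (∀ i, ¬(s i = 1 ∧ s (i + 1) = 1)) →
      (∀ i, t i ≤ 1) → (∀ i, ¬(t i = 1 ∧ t (i + 1) = 1)) →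
      ∀ h : ∃ k, s k ≠ t k,
        |(∑' i : ℕ, (s i : ℝ) * β₁ ^ (∑ k ∈ Finset.range (i + 1), s k)
              * β₀ ^ (i + 1 - ∑ k ∈ Finset.range (i + 1), s k)) -
         (∑' i : ℕ, (t i : ℝ) * β₁ ^ (∑ k ∈ Finset.range (i + 1), t k)
              * β₀ ^ (i + 1 - ∑ k ∈ Finset.range (i + 1), t k))|
        ≤ C * β₁ ^ (∑ k ∈ Finset.range (Nat.find h), s k)
            * β₀ ^ (Nat.find h - ∑ k ∈ Finset.range (Nat.find h), s k) := by
  obtain ⟨h₀, h₀'⟩ := hβ₀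
  obtain ⟨h₁, h₁'⟩ := hβ₁
  set M := max β₀ β₁
  have hM : M < 1 := max_lt h₀' h₁'
  refine ⟨M / (1 - M), div_pos (lt_max_of_lt_left h₀) (sub_pos.mpr hM), ?_⟩
  intro s t hs _ ht _ h
  have hagree : ∀ k < Nat.find h, s k = t k := fun k hk => not_not.mp (Nat.find_min h hk)
  rw [mul_assoc]
  exact abs_codingMap_sub_le h₀.le h₁.le (le_max_left _ _) (le_max_right _ _) hM hs ht hagree
end

section
/- The Parry entropy -( (p/(2-p))·log p + ((1-p)/(2-p))·log(1-p) ) of the Markov chain with transition matrix ((p,1-p),(1,0)) is maximized over p ∈ (0,1) at p = 1/φ = (√5 - 1)/2, and its maximal value is log φ where φ = (1+√5)/2 is the golden mean. -/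
/-!
Writing `H` for the binary entropy, the Parry entropy is `H p / (2 - p)`, `2 - p` being the
normalisation of the stationary vector `(1, 1 - p)` of the chain. Since `φ⁻¹ + φ⁻² = 1`,
Gibbs' inequality against the distribution `(φ⁻¹, φ⁻²)` gives
`H p ≤ -(p log φ⁻¹ + (1 - p) log φ⁻²) = (2 - p) log φ`, with equality at `p = φ⁻¹`.
-/

open Real goldenRatio

lemma neg_mul_log_le_sub_sub_mul_log {p q : ℝ} (hp : 0 ≤ p) (hq : 0 < q) :
    -(p * log p) ≤ q - p - p * log q := by
  rcases hp.eq_or_lt with rfl | hp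
  · simpa using hq.le
  have h := mul_le_mul_of_nonneg_left (log_le_sub_one_of_pos (div_pos hq hp)) hp.le
  rw [log_div hq.ne' hp.ne', mul_sub, mul_sub, mul_div_cancel₀ _ hp.ne'] at h
  linarith

/-- Gibbs' inequality for two-point distributions. -/
lemma binEntropy_le_neg_mul_log_add {p q : ℝ} (hp₀ : 0 ≤ p) (hp₁ : p ≤ 1) (hq₀ : 0 < q)
    (hq₁ : q < 1) : binEntropy p ≤ -(p * log q + (1 - p) * log (1 - q)) := by
  have h₁ := neg_mul_log_le_sub_sub_mul_log hp₀ hq₀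
  have h₂ := neg_mul_log_le_sub_sub_mul_log (sub_nonneg.2 hp₁) (sub_pos.2 hq₁)
  simp only [binEntropy, log_inv]
  linarith

lemma one_sub_inv_goldenRatio : 1 - φ⁻¹ = φ⁻¹ ^ 2 := by
  rw [inv_goldenRatio, neg_sq, goldenConj_sq]
  ring

lemma neg_mul_log_inv_goldenRatio_add (p : ℝ) :
    -(p * log φ⁻¹ + (1 - p) * log (1 - φ⁻¹)) = (2 - p) * log φ := by
  rw [one_sub_inv_goldenRatio, log_pow, log_inv]
  push_cast
  ring

lemma binEntropy_le_two_sub_mul_log_goldenRatio {p : ℝ} (hp₀ : 0 ≤ p) (hp₁ : p ≤ 1) :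
    binEntropy p ≤ (2 - p) * log φ := by
  have hφ₁ : φ⁻¹ < 1 := inv_lt_one_of_one_lt₀ one_lt_goldenRatio
  rw [← neg_mul_log_inv_goldenRatio_add]
  exact binEntropy_le_neg_mul_log_add hp₀ hp₁ (inv_pos.2 goldenRatio_pos) hφ₁

lemma binEntropy_inv_goldenRatio : binEntropy φ⁻¹ = (2 - φ⁻¹) * log φ := by
  rw [← neg_mul_log_inv_goldenRatio_add]
  simp only [binEntropy, log_inv]
  ring

noncomputable def parryEntropy (p : ℝ) : ℝ := binEntropy p / (2 - p)

lemma parryEntropy_eq (p : ℝ) :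
    parryEntropy p = -((p / (2 - p)) * log p + ((1 - p) / (2 - p)) * log (1 - p)) := by
  simp only [parryEntropy, binEntropy, log_inv]
  ring

lemma parryEntropy_le_log_goldenRatio {p : ℝ} (hp₀ : 0 ≤ p) (hp₁ : p ≤ 1) :
    parryEntropy p ≤ log φ :=
  div_le_of_le_mul₀ (by linarith) (log_nonneg one_lt_goldenRatio.le)
    (by linarith [binEntropy_le_two_sub_mul_log_goldenRatio hp₀ hp₁])

lemma parryEntropy_inv_goldenRatio : parryEntropy φ⁻¹ = log φ := by
  have hφ₁ : φ⁻¹ < 1 := inv_lt_one_of_one_lt₀ one_lt_goldenRatio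
  rw [parryEntropy, binEntropy_inv_goldenRatio, mul_div_cancel_left₀ _ (by linarith)]

/-- The Parry entropy h(p) = -((p/(2-p)) log p + ((1-p)/(2-p)) log(1-p)) is
maximized over p ∈ (0,1) at p = (√5-1)/2, with maximal value log((1+√5)/2). -/
theorem stmt_13 :
    let h : ℝ → ℝ := fun p =>
      -((p / (2 - p)) * Real.log p + ((1 - p) / (2 - p)) * Real.log (1 - p))
    (∀ p ∈ Set.Ioo (0:ℝ) 1, h p ≤ h ((Real.sqrt 5 - 1) / 2)) ∧
    h ((Real.sqrt 5 - 1) / 2) = Real.log ((1 + Real.sqrt 5) / 2) := by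
  intro h
  have h_eq : h = parryEntropy := funext fun p => (parryEntropy_eq p).symm
  have hφ : (√5 - 1) / 2 = φ⁻¹ := by rw [inv_goldenRatio]; ring
  rw [h_eq, hφ, parryEntropy_inv_goldenRatio]
  exact ⟨fun p hp => parryEntropy_le_log_goldenRatio hp.1.le hp.2.le, rfl⟩
end

section
/- Let f be a real analytic function on an interval I satisfying the δ-transversality condition: for all x ∈ I, f(x) < δ implies f'(x) < -δ. Then for every r ∈ (0, δ), the Lebesgue measure of the set {x ∈ I : |f(x)| ≤ r} is at most 2r/δ. -/
/-! Starting from a point where `f ≤ r < δ`, the function can never reach the level `r` from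
below, since there its derivative is `< -δ < 0`; so it stays below `δ` and, by transversality,
decreases with slope at most `-δ`. Two points of `{|f| ≤ r}` therefore lie within `2r/δ` of
each other, and a subset of `ℝ` has measure at most its diameter. -/

open Set

theorem image_le_of_deriv_neg_of_eq {f : ℝ → ℝ} {x y r : ℝ}
    (hf : ∀ t ∈ Icc x y, DifferentiableAt ℝ f t) (hx : f x ≤ r)
    (hneg : ∀ t ∈ Ico x y, f t = r → deriv f t < 0) : ∀ t ∈ Icc x y, f t ≤ r := fun _ ht ↦
  image_le_of_deriv_right_lt_deriv_boundary (B := fun _ ↦ r)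
    (fun t ht ↦ (hf t ht).continuousAt.continuousWithinAt)
    (fun t ht ↦ (hf t (Ico_subset_Icc_self ht)).hasDerivAt.hasDerivWithinAt) hx
    (fun _ ↦ hasDerivAt_const _ r) hneg ht

theorem mul_sub_le_image_sub_of_transversal {f : ℝ → ℝ} {x y δ r : ℝ}
    (hf : ∀ t ∈ Icc x y, DifferentiableAt ℝ f t)
    (htrans : ∀ t ∈ Icc x y, f t < δ → deriv f t < -δ) (hδ : 0 ≤ δ) (hrδ : r < δ)
    (hx : f x ≤ r) (hxy : x ≤ y) : δ * (y - x) ≤ f x - f y := by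
  have hle_r : ∀ t ∈ Icc x y, f t ≤ r := image_le_of_deriv_neg_of_eq hf hx fun t ht hft ↦
    (htrans t (Ico_subset_Icc_self ht) (hft ▸ hrδ)).trans_le (neg_nonpos.2 hδ)
  have hslope : f y - f x ≤ -δ * (y - x) := by
    refine (convex_Icc x y).image_sub_le_mul_sub_of_deriv_le
      (fun t ht ↦ (hf t ht).continuousAt.continuousWithinAt)
      (fun t ht ↦ (hf t (interior_subset ht)).differentiableWithinAt) (fun t ht ↦ ?_)
      x (left_mem_Icc.2 hxy) y (right_mem_Icc.2 hxy) hxy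
    have ht' := interior_subset ht
    exact (htrans t ht' ((hle_r t ht').trans_lt hrδ)).le
  linarith

theorem stmt_17_general (a b δ r : ℝ) (f : ℝ → ℝ) (hδ : 0 < δ)
    (han : ∀ x ∈ Set.Icc a b, AnalyticAt ℝ f x)
    (htrans : ∀ x ∈ Set.Icc a b, f x < δ → deriv f x < -δ)
    (hr : r ∈ Set.Ioo 0 δ) :
    MeasureTheory.volume {x ∈ Set.Icc a b | |f x| ≤ r} ≤ ENNReal.ofReal (2 * r / δ) := by
  set S := {x ∈ Icc a b | |f x| ≤ r}
  have hgap : ∀ x ∈ S, ∀ y ∈ S, x ≤ y → y - x ≤ 2 * r / δ := by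
    rintro x ⟨hxI, hx⟩ y ⟨hyI, hy⟩ hxy
    have hsub : Icc x y ⊆ Icc a b := Icc_subset_Icc hxI.1 hyI.2
    have hdrop := mul_sub_le_image_sub_of_transversal
      (fun t ht ↦ (han t (hsub ht)).differentiableAt) (fun t ht ↦ htrans t (hsub ht))
      hδ.le hr.2 (abs_le.1 hx).2 hxy
    rw [le_div_iff₀ hδ]
    linarith [(abs_le.1 hx).2, (abs_le.1 hy).1]
  have hdist : ∀ x ∈ S, ∀ y ∈ S, dist x y ≤ 2 * r / δ := by
    intro x hx y hy
    rcases le_total x y with hxy | hyx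
    · rw [dist_comm, Real.dist_eq, abs_of_nonneg (sub_nonneg.2 hxy)]
      exact hgap x hx y hy hxy
    · rw [Real.dist_eq, abs_of_nonneg (sub_nonneg.2 hyx)]
      exact hgap y hy x hx hyx
  exact (Real.volume_le_diam S).trans (Metric.ediam_le_of_forall_dist_le hdist)

/-- δ-transversality: if f is real analytic on [a,b] and f(x) < δ implies
f'(x) < -δ there, then for r ∈ (0,δ) the Lebesgue measure of
{x ∈ [a,b] : |f x| ≤ r} is at most 2r/δ. -/
theorem stmt_17 (a b δ r : ℝ) (f : ℝ → ℝ) (hab : a ≤ b) (hδ : 0 < δ)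
    (han : ∀ x ∈ Set.Icc a b, AnalyticAt ℝ f x)
    (htrans : ∀ x ∈ Set.Icc a b, f x < δ → deriv f x < -δ)
    (hr : r ∈ Set.Ioo 0 δ) :
    MeasureTheory.volume {x ∈ Set.Icc a b | |f x| ≤ r} ≤ ENNReal.ofReal (2 * r / δ) :=
  stmt_17_general a b δ r f hδ han htrans hr
end
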